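/- Let π : X → M be a smooth surjective map of diffeological spaces equipped with a path-lifting L and let m ∈ M. The relation ∼ on 𝓛(m;M) is compatible with concatenation and inversion of loops: (a) if γ ∼ γ' then γ⁻¹ ∼ (γ')⁻¹; (b) if γ ∼ γ' and δ ∼ δ' then γ∨δ ∼ γ'∨δ'; and (c) for any three loops γ, γ', γ'' ∈ 𝓛(m;M), one has γ∨(γ'∨γ'') ∼ (γ∨γ')∨γ''. -/

import Mathlib

open Set

/-- Euclidean space `ℝⁿ`. -/
abbrev Eucl (n : ℕ) : Type := EuclideanSpace ℝ (Fin n)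

/-- A system of parametrizations ("plots") on `X`: for each `n`, a predicate
`P O f` read as: the restriction of `f : ℝⁿ → X` to the domain `O ⊆ ℝⁿ` is a plot. -/
abbrev PlotsOn (X : Type*) : Type _ := ∀ ⦃n : ℕ⦄, Set (Eucl n) → (Eucl n → X) → Prop

/-- `P` is a diffeology on `X` (Souriau). -/
structure IsDiffeology {X : Type*} (P : PlotsOn X) : Prop where
  isOpen_dom : ∀ {n : ℕ} {O : Set (Eucl n)} {f : Eucl n → X}, P O f → IsOpen O
  congr : ∀ {n : ℕ} {O : Set (Eucl n)} {f g : Eucl n → X}, Set.EqOn f g O → P O f → P O g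
  const_mem : ∀ {n : ℕ} {O : Set (Eucl n)}, IsOpen O → ∀ x : X, P O fun _ => x
  locality : ∀ {n : ℕ} (S : Set (Set (Eucl n))) (f : Eucl n → X),
      (∀ O ∈ S, P O f) → P (⋃₀ S) f
  smooth_comp : ∀ {p q : ℕ} {O : Set (Eucl p)} {O' : Set (Eucl q)}
      {f : Eucl p → X} {g : Eucl q → Eucl p},
      P O f → IsOpen O' → ContDiffOn ℝ (⊤ : ℕ∞) g O' → Set.MapsTo g O' O → P O' (f ∘ g)

/-- Smooth maps between diffeological spaces. -/
def DSmooth {X X' : Type*} (P : PlotsOn X) (P' : PlotsOn X') (φ : X → X') : Prop :=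
  ∀ {n : ℕ} {O : Set (Eucl n)} {p : Eucl n → X}, P O p → P' O (φ ∘ p)

/-- Frölicher space structure on `X`. -/
structure IsFrolicher {X : Type*} (F : Set (X → ℝ)) (C : Set (ℝ → X)) : Prop where
  mem_F_iff : ∀ f : X → ℝ, f ∈ F ↔ ∀ c ∈ C, ContDiff ℝ (⊤ : ℕ∞) (f ∘ c)
  mem_C_iff : ∀ c : ℝ → X, c ∈ C ↔ ∀ f ∈ F, ContDiff ℝ (⊤ : ℕ∞) (f ∘ c)

/-- Smooth maps between Frölicher spaces. -/
def FSmooth {X X' : Type*} (F : Set (X → ℝ)) (C : Set (ℝ → X))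
    (F' : Set (X' → ℝ)) (_C' : Set (ℝ → X')) (φ : X → X') : Prop :=
  ∀ f' ∈ F', ∀ c ∈ C, ContDiff ℝ (⊤ : ℕ∞) (f' ∘ φ ∘ c)

/-- The natural diffeology `𝒫(ℱ)` of a Frölicher space. -/
def natPlots {X : Type*} (F : Set (X → ℝ)) : PlotsOn X :=
  fun _n O p => IsOpen O ∧ ∀ f ∈ F, ContDiffOn ℝ (⊤ : ℕ∞) (f ∘ p) O

/-- Contours generated by a family of functions `Fg`. -/
def genC {X : Type*} (Fg : Set (X → ℝ)) : Set (ℝ → X) :=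
  {c | ∀ f ∈ Fg, ContDiff ℝ (⊤ : ℕ∞) (f ∘ c)}

/-- Functions of the Frölicher structure generated by a family of functions `Fg`. -/
def genF {X : Type*} (Fg : Set (X → ℝ)) : Set (X → ℝ) :=
  {f | ∀ c ∈ genC Fg, ContDiff ℝ (⊤ : ℕ∞) (f ∘ c)}

section PathLifting

/-- Reversal `γ⁻¹` of a path: `γ⁻¹(t) = γ(1 − t)`. -/
def pathInv {M : Type*} (γ : ℝ → M) : ℝ → M := fun t => γ (1 - t)

/-- Concatenation `a ∨ b` of two paths (stationary at their endpoints):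
traverse `b` first, then `a`. -/
noncomputable def pathConcat {M : Type*} (a b : ℝ → M) : ℝ → M :=
  fun t => if t ≤ 1 / 2 then b (2 * t) else a (2 * t - 1)

/-- A path (parametrized by `ℝ`, regarded through its restriction to `[0,1]`) is
stationary at its endpoints if it is constant near `0` and near `1`. -/
def StationaryPath {M : Type*} (γ : ℝ → M) : Prop :=
  (∃ ε > (0:ℝ), ∀ t ≤ ε, γ t = γ 0) ∧ (∃ ε > (0:ℝ), ∀ t ≥ 1 - ε, γ t = γ 1)

/-- A smooth path on a diffeological space: a `1`-plot defined on all of `ℝ`. -/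
def IsSmoothPath {M : Type*} (PM : PlotsOn M) (γ : ℝ → M) : Prop :=
  PM (Set.univ : Set (Eucl 1)) (fun z => γ (z 0))

/-- A smooth loop based at `m`, stationary at its endpoints. -/
def IsLoopAt {M : Type*} (PM : PlotsOn M) (m : M) (γ : ℝ → M) : Prop :=
  IsSmoothPath PM γ ∧ StationaryPath γ ∧ γ 0 = m ∧ γ 1 = m

/-- A path-lifting on the smooth surjection `π : X → M`: a smooth assignment
`(γ, x) ↦ L γ x` of paths of `X` to pairs of a smooth path `γ` of `M` and a point
`x ∈ π⁻¹(γ 0)`, satisfying the axioms (i)–(vi) of Definition `pl` of the paper. -/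
structure IsPathLifting {X M : Type*} (PX : PlotsOn X) (PM : PlotsOn M) (π : X → M)
    (L : (ℝ → M) → X → ℝ → X) : Prop where
  /-- `L` is smooth: it maps smooth families of (paths, initial points) to smooth
  families of paths (smoothness is tested on finite-dimensional plots, by
  cartesian closedness). -/
  smooth : ∀ {n : ℕ} {O : Set (Eucl n)} (γ : Eucl n → ℝ → M) (ξ : Eucl n → X),
      PM {z : Eucl (n+1) | (WithLp.toLp 2 fun i : Fin n => z i.castSucc) ∈ O}
        (fun z => γ (WithLp.toLp 2 fun i : Fin n => z i.castSucc) (z (Fin.last n))) →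
      PX O ξ → (∀ z ∈ O, π (ξ z) = γ z 0) →
      PX {z : Eucl (n+1) | (WithLp.toLp 2 fun i : Fin n => z i.castSucc) ∈ O}
        (fun z => L (γ (WithLp.toLp 2 fun i : Fin n => z i.castSucc)) (ξ (WithLp.toLp 2 fun i : Fin n => z i.castSucc)) (z (Fin.last n)))
  /-- liftings are smooth paths -/
  lift_isPath : ∀ γ x, IsSmoothPath PM γ → π x = γ 0 → IsSmoothPath PX (L γ x)
  /-- (i) `π ∘ L_x(γ) = γ` -/
  lift_proj : ∀ γ x, IsSmoothPath PM γ → π x = γ 0 → ∀ t, π (L γ x t) = γ t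
  /-- (ii) `L_x(γ' ∨ γ'') = L_{L_x(γ'')(1)}(γ') ∨ L_x(γ'')` -/
  lift_concat : ∀ γ' γ'' x, IsSmoothPath PM γ' → IsSmoothPath PM γ'' →
      StationaryPath γ' → StationaryPath γ'' → γ'' 1 = γ' 0 → π x = γ'' 0 →
      L (pathConcat γ' γ'') x = pathConcat (L γ' (L γ'' x 1)) (L γ'' x)
  /-- (iii) `L_x(γ ∘ g) = L_x(γ) ∘ g` for `g : [0,1] → [0,1]` smooth monotone -/
  lift_reparam : ∀ γ x (g : ℝ → ℝ), IsSmoothPath PM γ → π x = γ 0 →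
      ContDiff ℝ (⊤ : ℕ∞) g → Monotone g → Set.MapsTo g (Set.Icc (0:ℝ) 1) (Set.Icc (0:ℝ) 1) →
      L (γ ∘ g) x = (L γ x) ∘ g
  /-- (iv) `L_x(γ⁻¹ ∨ γ)(1) = x` -/
  lift_inv_concat : ∀ γ x, IsSmoothPath PM γ → StationaryPath γ → π x = γ 0 →
      L (pathConcat (pathInv γ) γ) x 1 = x
  /-- (v) `L_x(γ)(0) = x` -/
  lift_start : ∀ γ x, IsSmoothPath PM γ → π x = γ 0 → L γ x 0 = x
  /-- (vi) if `L_x(γ)(1) = x` for some `x ∈ π⁻¹(γ 0)` then for every such `x` -/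
  loop_exists_iff : ∀ γ, IsSmoothPath PM γ → γ 1 = γ 0 →
      (∃ x, π x = γ 0 ∧ L γ x 1 = x) → ∀ x, π x = γ 0 → L γ x 1 = x

/-- The relation `γ ∼ γ'` on loops based at `m`: the liftings from some point of the
fiber `π⁻¹(m)` have the same endpoint. -/
def simRel {X M : Type*} (L : (ℝ → M) → X → ℝ → X) (π : X → M) (m : M)
    (γ γ' : ℝ → M) : Prop :=
  ∃ x, π x = m ∧ L γ x 1 = L γ' x 1

/-- Membership in `𝓛₀^L(m;M)`: a loop based at `m` whose lifting from some point
of the fiber is again a loop. -/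
def IsNullLoop {X M : Type*} (L : (ℝ → M) → X → ℝ → X) (π : X → M)
    (PM : PlotsOn M) (m : M) (γ : ℝ → M) : Prop :=
  IsLoopAt PM m γ ∧ ∃ x, π x = m ∧ L γ x 1 = x

end PathLifting

section AuxLemmas

variable {M : Type*}

lemma pathInv_zero' (γ : ℝ → M) : pathInv γ 0 = γ 1 := by
  simp [pathInv]

lemma pathInv_one' (γ : ℝ → M) : pathInv γ 1 = γ 0 := by
  simp [pathInv]

lemma pathInv_pathInv' (γ : ℝ → M) : pathInv (pathInv γ) = γ := by
  funext t; simp [pathInv]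

lemma pathConcat_zero' (a b : ℝ → M) : pathConcat a b 0 = b 0 := by
  norm_num [pathConcat]

lemma pathConcat_one' (a b : ℝ → M) : pathConcat a b 1 = a 1 := by
  norm_num [pathConcat]

lemma stationaryPath_pathInv' {γ : ℝ → M} (h : StationaryPath γ) :
    StationaryPath (pathInv γ) := by
  obtain ⟨⟨ε0, hε0, h0⟩, ⟨ε1, hε1, h1⟩⟩ := h
  refine ⟨⟨ε1, hε1, fun t ht => ?_⟩, ⟨ε0, hε0, fun t ht => ?_⟩⟩
  · show γ (1 - t) = γ (1 - 0)
    rw [h1 _ (by linarith), show (1:ℝ) - 0 = 1 from by ring]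
  · show γ (1 - t) = γ (1 - 1)
    rw [h0 _ (by linarith), show (1:ℝ) - 1 = 0 from by ring]

lemma stationaryPath_pathConcat' {a b : ℝ → M}
    (hsa : StationaryPath a) (hsb : StationaryPath b) :
    StationaryPath (pathConcat a b) := by
  obtain ⟨_, ⟨εa, hεa, hA⟩⟩ := hsa
  obtain ⟨⟨εb, hεb, hB⟩, _⟩ := hsb
  constructor
  · refine ⟨min (εb / 2) (1 / 2), by positivity, fun t ht => ?_⟩
    have ht1 : t ≤ 1 / 2 := le_trans ht (min_le_right _ _)
    have ht2 : 2 * t ≤ εb := by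
      have := le_trans ht (min_le_left _ _); linarith
    rw [pathConcat_zero']
    simp only [pathConcat, if_pos ht1]
    exact hB _ ht2
  · refine ⟨min (εa / 2) (1 / 4), by positivity, fun t ht => ?_⟩
    have h4 : min (εa / 2) (1 / 4) ≤ 1 / 4 := min_le_right _ _
    have h5 : min (εa / 2) (1 / 4) ≤ εa / 2 := min_le_left _ _
    have ht1 : ¬ (t ≤ 1 / 2) := by push_neg; linarith
    have ht2 : 2 * t - 1 ≥ 1 - εa := by linarith
    rw [pathConcat_one']
    simp only [pathConcat, if_neg ht1]
    exact hA _ ht2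

lemma isSmoothPath_pathInv' {PM : PlotsOn M} (hPM : IsDiffeology PM)
    {γ : ℝ → M} (h : IsSmoothPath PM γ) : IsSmoothPath PM (pathInv γ) := by
  have hg : ContDiffOn ℝ (⊤ : ℕ∞)
      (fun z : Eucl 1 => EuclideanSpace.single (0 : Fin 1) (1 : ℝ) - z)
      (Set.univ : Set (Eucl 1)) :=
    (contDiff_const.sub contDiff_id).contDiffOn
  have hc := hPM.smooth_comp h isOpen_univ hg (Set.mapsTo_univ _ _)
  refine hPM.congr (fun z _ => ?_) hc
  simp [Function.comp, pathInv, EuclideanSpace.single_apply]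

lemma isSmoothPath_pathConcat' {PM : PlotsOn M} (hPM : IsDiffeology PM)
    {a b : ℝ → M} (ha : IsSmoothPath PM a) (hb : IsSmoothPath PM b)
    (hsa : StationaryPath a) (hsb : StationaryPath b) (hab : b 1 = a 0) :
    IsSmoothPath PM (pathConcat a b) := by
  obtain ⟨⟨εa, hεa, hA⟩, _⟩ := hsa
  obtain ⟨_, ⟨εb, hεb, hB⟩⟩ := hsb
  have hcont : Continuous fun z : Eucl 1 => z 0 :=
    (EuclideanSpace.proj (0 : Fin 1)).continuous
  have hO₁o : IsOpen {z : Eucl 1 | z 0 < (1 + εa) / 2} :=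
    isOpen_lt hcont continuous_const
  have hO₂o : IsOpen {z : Eucl 1 | (1 - εb) / 2 < z 0} :=
    isOpen_lt continuous_const hcont
  have h₁ : PM {z : Eucl 1 | z 0 < (1 + εa) / 2}
      (fun z : Eucl 1 => pathConcat a b (z 0)) := by
    have hg : ContDiffOn ℝ (⊤ : ℕ∞) (fun z : Eucl 1 => (2 : ℝ) • z)
        {z : Eucl 1 | z 0 < (1 + εa) / 2} :=
      (contDiff_id.const_smul (2 : ℝ)).contDiffOn
    have hc := hPM.smooth_comp hb hO₁o hg (Set.mapsTo_univ _ _)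
    refine hPM.congr (fun z hz => ?_) hc
    have hz' : z 0 < (1 + εa) / 2 := hz
    show b (((2 : ℝ) • z) 0) = pathConcat a b (z 0)
    have hsm : ((2 : ℝ) • z) 0 = 2 * z 0 := rfl
    rw [hsm]
    simp only [pathConcat]
    by_cases ht : z 0 ≤ 1 / 2
    · rw [if_pos ht]
    · push_neg at ht
      rw [if_neg (not_le.mpr ht), hA (2 * z 0 - 1) (by linarith), ← hab]
      exact hB _ (by linarith)
  have h₂ : PM {z : Eucl 1 | (1 - εb) / 2 < z 0}
      (fun z : Eucl 1 => pathConcat a b (z 0)) := by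
    have hg : ContDiffOn ℝ (⊤ : ℕ∞)
        (fun z : Eucl 1 => (2 : ℝ) • z - EuclideanSpace.single (0 : Fin 1) (1 : ℝ))
        {z : Eucl 1 | (1 - εb) / 2 < z 0} :=
      ((contDiff_id.const_smul (2 : ℝ)).sub contDiff_const).contDiffOn
    have hc := hPM.smooth_comp ha hO₂o hg (Set.mapsTo_univ _ _)
    refine hPM.congr (fun z hz => ?_) hc
    have hz' : (1 - εb) / 2 < z 0 := hz
    show a (((2 : ℝ) • z - EuclideanSpace.single (0 : Fin 1) (1 : ℝ)) 0)
        = pathConcat a b (z 0)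
    have hsm : ((2 : ℝ) • z - EuclideanSpace.single (0 : Fin 1) (1 : ℝ)) 0
        = 2 * z 0 - 1 := by
      simp [EuclideanSpace.single_apply]
    rw [hsm]
    simp only [pathConcat]
    by_cases ht : z 0 ≤ 1 / 2
    · rw [if_pos ht, hA (2 * z 0 - 1) (by linarith), ← hab]
      exact (hB _ (by linarith)).symm
    · rw [if_neg ht]
  have hloc := hPM.locality
      ({{z : Eucl 1 | z 0 < (1 + εa) / 2}, {z : Eucl 1 | (1 - εb) / 2 < z 0}} :
        Set (Set (Eucl 1)))
      (fun z : Eucl 1 => pathConcat a b (z 0))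
      (by rintro O (rfl | rfl); exacts [h₁, h₂])
  have huniv : ⋃₀ ({{z : Eucl 1 | z 0 < (1 + εa) / 2},
      {z : Eucl 1 | (1 - εb) / 2 < z 0}} : Set (Set (Eucl 1)))
      = (Set.univ : Set (Eucl 1)) := by
    rw [Set.sUnion_pair]
    apply Set.eq_univ_of_forall
    intro z
    by_cases h : z 0 < (1 + εa) / 2
    · exact Or.inl h
    · exact Or.inr (by push_neg at h; simp only [Set.mem_setOf_eq]; linarith)
  rw [huniv] at hloc
  exact hloc

end AuxLemmas

/-- the relation `∼` on `𝓛(m;M)` is compatible with inversion and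
concatenation of loops, and concatenation is associative up to `∼`. -/
theorem simRel_compatible_with_loop_operations
    {X M : Type*} {PX : PlotsOn X} {PM : PlotsOn M}
    (hPX : IsDiffeology PX) (hPM : IsDiffeology PM)
    {π : X → M} (hsurj : Function.Surjective π) (hπ : DSmooth PX PM π)
    {L : (ℝ → M) → X → ℝ → X} (hL : IsPathLifting PX PM π L) (m : M) :
    -- (a) compatibility with inversion
    (∀ γ γ' : ℝ → M, IsLoopAt PM m γ → IsLoopAt PM m γ' →
      simRel L π m γ γ' → simRel L π m (pathInv γ) (pathInv γ')) ∧
    -- (b) compatibility with concatenation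
    (∀ γ γ' δ δ' : ℝ → M, IsLoopAt PM m γ → IsLoopAt PM m γ' →
      IsLoopAt PM m δ → IsLoopAt PM m δ' →
      simRel L π m γ γ' → simRel L π m δ δ' →
      simRel L π m (pathConcat γ δ) (pathConcat γ' δ')) ∧
    -- (c) associativity up to ∼
    (∀ γ γ' γ'' : ℝ → M, IsLoopAt PM m γ → IsLoopAt PM m γ' → IsLoopAt PM m γ'' →
      simRel L π m (pathConcat γ (pathConcat γ' γ''))
        (pathConcat (pathConcat γ γ') γ'')) := by
  -- endpoint of the lift of a concatenation
  have endE : ∀ a b : ℝ → M, IsSmoothPath PM a → IsSmoothPath PM b →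
      StationaryPath a → StationaryPath b → b 1 = a 0 →
      ∀ x, π x = b 0 → L (pathConcat a b) x 1 = L a (L b x 1) 1 := by
    intro a b hsa hsb hta htb hab x hx
    have h := congrFun (hL.lift_concat a b x hsa hsb hta htb hab hx) 1
    rwa [pathConcat_one'] at h
  -- axiom (iv) in endpoint form:  L_{L_x(γ)(1)}(γ⁻¹)(1) = x
  have endA : ∀ γ : ℝ → M, IsSmoothPath PM γ → StationaryPath γ →
      ∀ x, π x = γ 0 → L (pathInv γ) (L γ x 1) 1 = x := by
    intro γ hs ht x hx
    have hinv_s := isSmoothPath_pathInv' hPM hs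
    have hinv_t := stationaryPath_pathInv' ht
    have h4 := hL.lift_inv_concat γ x hs ht hx
    rw [hL.lift_concat (pathInv γ) γ x hinv_s hs hinv_t ht (pathInv_zero' γ).symm hx,
      pathConcat_one'] at h4
    exact h4
  -- the reverse identity:  L_{L_z(γ⁻¹)(1)}(γ)(1) = z
  have endB : ∀ γ : ℝ → M, IsSmoothPath PM γ → StationaryPath γ →
      ∀ z, π z = γ 1 → L γ (L (pathInv γ) z 1) 1 = z := by
    intro γ hs ht z hz
    have h := endA (pathInv γ) (isSmoothPath_pathInv' hPM hs)
      (stationaryPath_pathInv' ht) z (by rw [pathInv_zero']; exact hz)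
    rwa [pathInv_pathInv'] at h
  -- key lemma: the relation ∼ does not depend on the chosen point in the fiber
  have key : ∀ γ γ' : ℝ → M, IsLoopAt PM m γ → IsLoopAt PM m γ' →
      simRel L π m γ γ' → ∀ y, π y = m → L γ y 1 = L γ' y 1 := by
    rintro γ γ' ⟨hγs, hγt, hγ0, hγ1⟩ ⟨hγ's, hγ't, hγ'0, hγ'1⟩ ⟨x, hx, hxeq⟩ y hy
    have hinv_s := isSmoothPath_pathInv' hPM hγ's
    have hinv_t := stationaryPath_pathInv' hγ't
    have hab : γ 1 = pathInv γ' 0 := by rw [pathInv_zero', hγ1, hγ'1]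
    have hτs : IsSmoothPath PM (pathConcat (pathInv γ') γ) :=
      isSmoothPath_pathConcat' hPM hinv_s hγs hinv_t hγt hab
    have hτ10 : pathConcat (pathInv γ') γ 1 = pathConcat (pathInv γ') γ 0 := by
      rw [pathConcat_one', pathConcat_zero', pathInv_one', hγ'0, hγ0]
    have hτ0 : pathConcat (pathInv γ') γ 0 = m := by rw [pathConcat_zero', hγ0]
    have hconc : ∀ w, π w = m →
        L (pathConcat (pathInv γ') γ) w 1 = L (pathInv γ') (L γ w 1) 1 := by
      intro w hw
      exact endE (pathInv γ') γ hinv_s hγs hinv_t hγt hab w (hw.trans hγ0.symm)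
    have hx' : L (pathConcat (pathInv γ') γ) x 1 = x := by
      rw [hconc x hx, hxeq]
      exact endA γ' hγ's hγ't x (hx.trans hγ'0.symm)
    have hall := hL.loop_exists_iff (pathConcat (pathInv γ') γ) hτs hτ10
      ⟨x, by rw [hτ0]; exact hx, hx'⟩ y (by rw [hτ0]; exact hy)
    rw [hconc y hy] at hall
    have hprj : π (L γ y 1) = γ' 1 := by
      rw [hL.lift_proj γ y hγs (hy.trans hγ0.symm) 1, hγ1, hγ'1]
    have hB := endB γ' hγ's hγ't (L γ y 1) hprj
    rw [hall] at hB
    exact hB.symm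
  refine ⟨?_, ?_, ?_⟩
  · -- (a) inversion
    rintro γ γ' hγ hγ' ⟨x, hx, hxe⟩
    obtain ⟨hγs, hγt, hγ0, hγ1⟩ := hγ
    obtain ⟨hγ's, hγ't, hγ'0, hγ'1⟩ := hγ'
    refine ⟨L γ x 1, ?_, ?_⟩
    · rw [hL.lift_proj γ x hγs (hx.trans hγ0.symm) 1, hγ1]
    · rw [endA γ hγs hγt x (hx.trans hγ0.symm), hxe]
      exact (endA γ' hγ's hγ't x (hx.trans hγ'0.symm)).symm
  · -- (b) concatenation
    rintro γ γ' δ δ' hγ hγ' hδ hδ' hgg hdd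
    obtain ⟨x, hx, -⟩ := id hgg
    refine ⟨x, hx, ?_⟩
    obtain ⟨hγs, hγt, hγ0, hγ1⟩ := hγ
    obtain ⟨hγ's, hγ't, hγ'0, hγ'1⟩ := hγ'
    obtain ⟨hδs, hδt, hδ0, hδ1⟩ := hδ
    obtain ⟨hδ's, hδ't, hδ'0, hδ'1⟩ := hδ'
    rw [endE γ δ hγs hδs hγt hδt (by rw [hδ1, hγ0]) x (hx.trans hδ0.symm),
      endE γ' δ' hγ's hδ's hγ't hδ't (by rw [hδ'1, hγ'0]) x (hx.trans hδ'0.symm)]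
    have hdx : L δ x 1 = L δ' x 1 :=
      key δ δ' ⟨hδs, hδt, hδ0, hδ1⟩ ⟨hδ's, hδ't, hδ'0, hδ'1⟩ hdd x hx
    have hu : π (L δ' x 1) = m := by
      rw [hL.lift_proj δ' x hδ's (hx.trans hδ'0.symm) 1, hδ'1]
    rw [hdx]
    exact key γ γ' ⟨hγs, hγt, hγ0, hγ1⟩ ⟨hγ's, hγ't, hγ'0, hγ'1⟩ hgg _ hu
  · -- (c) associativity
    rintro γ γ' γ'' hγ hγ' hγ''
    obtain ⟨hγs, hγt, hγ0, hγ1⟩ := hγ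
    obtain ⟨hγ's, hγ't, hγ'0, hγ'1⟩ := hγ'
    obtain ⟨hγ''s, hγ''t, hγ''0, hγ''1⟩ := hγ''
    obtain ⟨x, hx⟩ := hsurj m
    refine ⟨x, hx, ?_⟩
    have hbc_s : IsSmoothPath PM (pathConcat γ' γ'') :=
      isSmoothPath_pathConcat' hPM hγ's hγ''s hγ't hγ''t (by rw [hγ''1, hγ'0])
    have hbc_t : StationaryPath (pathConcat γ' γ'') :=
      stationaryPath_pathConcat' hγ't hγ''t
    have hab_s : IsSmoothPath PM (pathConcat γ γ') :=
      isSmoothPath_pathConcat' hPM hγs hγ's hγt hγ't (by rw [hγ'1, hγ0])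
    have hab_t : StationaryPath (pathConcat γ γ') :=
      stationaryPath_pathConcat' hγt hγ't
    have hx'' : π (L γ'' x 1) = m := by
      rw [hL.lift_proj γ'' x hγ''s (hx.trans hγ''0.symm) 1, hγ''1]
    rw [endE γ (pathConcat γ' γ'') hγs hbc_s hγt hbc_t
        (by rw [pathConcat_one', hγ'1, hγ0]) x
        (by rw [pathConcat_zero', hγ''0]; exact hx),
      endE γ' γ'' hγ's hγ''s hγ't hγ''t (by rw [hγ''1, hγ'0]) x (hx.trans hγ''0.symm),
      endE (pathConcat γ γ') γ'' hab_s hγ''s hab_t hγ''t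
        (by rw [pathConcat_zero', hγ''1, hγ'0]) x (hx.trans hγ''0.symm),
      endE γ γ' hγs hγ's hγt hγ't (by rw [hγ'1, hγ0]) (L γ'' x 1)
        (hx''.trans hγ'0.symm)]
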